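/- arXiv:math/0609091 — 9 statements merged into one kernel-verified Lean document; each statement's English description precedes it below -/
import Mathlib

section
/- A topological space X is κ-resolvable (contains κ pairwise disjoint dense subsets) if and only if every nonempty open subspace of X contains a nonempty κ-resolvable subset; equivalently, iff X has a π-network consisting of κ-resolvable subsets. -/
universe u

open Cardinal Set

/-- A space is `κ`-resolvable iff it has `κ` pairwise disjoint dense subsets. -/
def Resolvable (X : Type u) [TopologicalSpace X] (κ : Cardinal.{u}) : Prop :=
  ∃ (ι : Type u) (D : ι → Set X), #ι = κ ∧ (∀ i, Dense (D i)) ∧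
    Pairwise (Function.onFun Disjoint D)

/-- `L` is left-separated: it has a well-ordering all of whose initial segments
are closed in the subspace `L`. -/
def LeftSeparated {X : Type u} [TopologicalSpace X] (L : Set X) : Prop :=
  ∃ r : L → L → Prop, IsWellOrder L r ∧ ∀ x : L, IsClosed {y : L | r y x}

/-- `R` is right-separated: it has a well-ordering all of whose initial segments
are open in the subspace `R`. -/
def RightSeparated {X : Type u} [TopologicalSpace X] (R : Set X) : Prop :=
  ∃ r : R → R → Prop, IsWellOrder R r ∧ ∀ x : R, IsOpen {y : R | r y x}

/-- The dispersion character `Δ(X)`: the minimal cardinality of a nonempty open set. -/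
noncomputable def dispersion (X : Type u) [TopologicalSpace X] : Cardinal.{u} :=
  sInf {c | ∃ G : Set X, IsOpen G ∧ G.Nonempty ∧ #G = c}

/-- An open subspace of a `κ`-resolvable space is `κ`-resolvable. -/
lemma resolvable_open {X : Type u} [TopologicalSpace X] {U : Set X} (hU : IsOpen U)
    {κ : Cardinal.{u}} (h : Resolvable X κ) : Resolvable ↥U κ := by
  obtain ⟨ι, D, hι, hdense, hdisj⟩ := h
  exact ⟨ι, fun i => Subtype.val ⁻¹' D i, hι,
    fun i => (hdense i).preimage hU.isOpenMap_subtype_val,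
    fun i j hij => Disjoint.preimage _ (hdisj hij)⟩

/-- Reindex witnesses of resolvability of a subset over `κ.out`, expressed in the
ambient space. -/
lemma resolvable_out {X : Type u} [TopologicalSpace X] {Y : Set X} {κ : Cardinal.{u}}
    (h : Resolvable ↥Y κ) :
    ∃ d : κ.out → Set X, (∀ i, d i ⊆ Y) ∧ (∀ i, Y ⊆ closure (d i)) ∧
      Pairwise (Function.onFun Disjoint d) := by
  obtain ⟨ι, D, hι, hdense, hdisj⟩ := h
  have he : Nonempty (κ.out ≃ ι) := by
    rw [← Cardinal.eq, hι, Cardinal.mk_out]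
  obtain ⟨e⟩ := he
  refine ⟨fun i => Subtype.val '' D (e i), ?_, ?_, ?_⟩
  · rintro i x ⟨y, _, rfl⟩; exact y.2
  · intro i x hx
    exact closure_subtype.mp (hdense (e i) ⟨x, hx⟩)
  · intro i j hij
    exact (Set.disjoint_image_iff Subtype.val_injective).mpr (hdisj (e.injective.ne hij))

/-- El'kin's lemma: `X` is `κ`-resolvable iff every nonempty open subspace of `X`
contains a nonempty `κ`-resolvable subset. -/
theorem stmt0 {X : Type u} [TopologicalSpace X] (κ : Cardinal.{u}) (hκ : 1 < κ) :
    Resolvable X κ ↔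
      ∀ U : Set X, IsOpen U → U.Nonempty →
        ∃ Y : Set X, Y ⊆ U ∧ Y.Nonempty ∧ Resolvable ↥Y κ := by
  constructor
  · intro h U hU hUne
    exact ⟨U, Subset.rfl, hUne, resolvable_open hU h⟩
  · intro h
    set S : Set (Set (Set X)) := {F | (∀ Y ∈ F, Resolvable ↥Y κ) ∧ F.PairwiseDisjoint id}
      with hS
    obtain ⟨F, hF⟩ : ∃ F, Maximal (· ∈ S) F := by
      apply zorn_subset
      intro c hc hchain
      refine ⟨⋃₀ c, ⟨?_, ?_⟩, fun s hs => subset_sUnion_of_mem hs⟩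
      · rintro Y ⟨G, hG, hY⟩; exact (hc hG).1 Y hY
      · rintro Y ⟨G1, hG1, hY1⟩ Z ⟨G2, hG2, hZ2⟩ hne
        rcases hchain.total hG1 hG2 with h12 | h21
        · exact (hc hG2).2 (h12 hY1) hZ2 hne
        · exact (hc hG1).2 hY1 (h21 hZ2) hne
    -- the union of the maximal family is dense
    have hdense : Dense (⋃₀ F) := by
      by_contra hcon
      have hUo : IsOpen (closure (⋃₀ F))ᶜ := isClosed_closure.isOpen_compl
      have hUne : (closure (⋃₀ F))ᶜ.Nonempty := by
        rw [nonempty_compl]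
        intro heq
        exact hcon (dense_iff_closure_eq.mpr heq)
      obtain ⟨Y, hYU, hYne, hYres⟩ := h _ hUo hUne
      have hYdisj : ∀ Z ∈ F, Disjoint Y Z := fun Z hZ =>
        Set.disjoint_left.mpr fun x hxY hxZ =>
          hYU hxY (subset_closure ⟨Z, hZ, hxZ⟩)
      have hmem : insert Y F ∈ S := by
        constructor
        · rintro Z (rfl | hZ)
          · exact hYres
          · exact hF.1.1 Z hZ
        · exact hF.1.2.insert fun Z hZ _ => hYdisj Z hZ
      have hYF : Y ∈ F := hF.2 hmem (subset_insert Y F) (mem_insert Y F)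
      obtain ⟨x, hx⟩ := hYne
      exact hYU hx (subset_closure ⟨Y, hYF, hx⟩)
    choose d hdY hdcl hdpw using fun Y : F => resolvable_out (hF.1.1 Y.1 Y.2)
    refine ⟨κ.out, fun i => ⋃ Y : F, d Y i, Cardinal.mk_out κ, ?_, ?_⟩
    · intro i
      have h1 : ⋃₀ F ⊆ closure (⋃ Y : F, d Y i) := by
        rintro x ⟨Y, hY, hx⟩
        exact closure_mono (subset_iUnion (fun Z : F => d Z i) ⟨Y, hY⟩) (hdcl ⟨Y, hY⟩ i hx)
      exact dense_closure.mp (hdense.mono h1)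
    · intro i j hij
      rw [Function.onFun, Set.disjoint_left]
      rintro x hxi hxj
      obtain ⟨_, ⟨Y, rfl⟩, hxY⟩ := hxi
      obtain ⟨_, ⟨Z, rfl⟩, hxZ⟩ := hxj
      by_cases hYZ : Y = Z
      · subst hYZ
        exact Set.disjoint_left.mp (hdpw Y hij) hxY hxZ
      · have : Y.1 ≠ Z.1 := fun hv => hYZ (Subtype.ext hv)
        exact Set.disjoint_left.mp (hF.1.2 Y.2 Z.2 this) (hdY Y i hxY) (hdY Z j hxZ)
end

section
/- If every nonempty open subset U of a topological space X satisfies ls(U) ≥ κ (i.e., U cannot be written as a union of fewer than κ left-separated subspaces), then X is κ-resolvable. -/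
universe u

open Cardinal Set

/-
Proof idea: index by the initial ordinal of `κ` and choose, at stage `a`, a left-separated set
dense in the complement of the sets chosen before. These sets are pairwise disjoint. The complement
at stage `a` is dense, since otherwise the interior of the union of the fewer than `κ` earlier
left-separated sets would be a nonempty open set covered by them; so each chosen set is dense.
-/

section LeftSeparatedCore

variable {X : Type u} [TopologicalSpace X]

def leftSeparatedCore (r : X → X → Prop) (S : Set X) : Set X :=
  {y ∈ S | y ∉ closure {z ∈ S | r z y}}

variable (r : X → X → Prop) (S : Set X)

theorem leftSeparatedCore_subset : leftSeparatedCore r S ⊆ S :=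
  fun _ hy => hy.1

theorem subset_closure_leftSeparatedCore [IsWellFounded X r] :
    S ⊆ closure (leftSeparatedCore r S) := by
  intro y
  induction y using IsWellFounded.induction r with
  | ind y ih =>
    intro hy
    by_cases hcore : y ∈ leftSeparatedCore r S
    · exact subset_closure hcore
    · have hpred : {z ∈ S | r z y} ⊆ closure (leftSeparatedCore r S) :=
        fun z hz => ih z hz.2 hz.1
      exact closure_minimal hpred isClosed_closure (not_and_not_right.mp hcore hy)

theorem leftSeparated_leftSeparatedCore [IsWellOrder X r] :
    LeftSeparated (leftSeparatedCore r S) := by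
  refine ⟨Subrel r (· ∈ leftSeparatedCore r S), inferInstance, fun x => ?_⟩
  suffices {y : leftSeparatedCore r S | r y x} = Subtype.val ⁻¹' closure {z ∈ S | r z x} by
    simpa only [subrel_val, this] using isClosed_closure.preimage continuous_subtype_val
  ext y
  refine ⟨fun hyx => subset_closure ⟨y.2.1, hyx⟩, fun hy => ?_⟩
  rcases trichotomous_of r y.1 x.1 with hyx | hyx | hxy
  · exact hyx
  · rw [mem_preimage, ← hyx] at hy
    exact absurd hy y.2.2
  · refine absurd (closure_mono ?_ hy) y.2.2
    exact fun z hz => ⟨hz.1, _root_.trans hz.2 hxy⟩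

end LeftSeparatedCore

section Tower

variable {X : Type u} [TopologicalSpace X] {ι : Type u} [LinearOrder ι] [WellFoundedLT ι]

noncomputable def leftSeparatedTower : ι → Set X :=
  WellFoundedLT.fix fun a earlier =>
    leftSeparatedCore WellOrderingRel (⋃ b : Iio a, earlier b b.2)ᶜ

theorem leftSeparatedTower_eq (a : ι) :
    leftSeparatedTower (X := X) a =
      leftSeparatedCore WellOrderingRel (⋃ b : Iio a, leftSeparatedTower b.1)ᶜ := by
  rw [leftSeparatedTower, WellFoundedLT.fix_eq]

theorem leftSeparated_leftSeparatedTower (a : ι) :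
    LeftSeparated (leftSeparatedTower (X := X) a) := by
  rw [leftSeparatedTower_eq]
  exact leftSeparated_leftSeparatedCore _ _

theorem dense_leftSeparatedTower {a : ι}
    (hd : Dense (⋃ b : Iio a, leftSeparatedTower (X := X) b.1)ᶜ) :
    Dense (leftSeparatedTower (X := X) a) := by
  rw [leftSeparatedTower_eq]
  exact dense_closure.mp (hd.mono (subset_closure_leftSeparatedCore _ _))

theorem pairwise_disjoint_leftSeparatedTower :
    Pairwise (Function.onFun Disjoint (leftSeparatedTower : ι → Set X)) := by
  have hlt : ∀ a b : ι, b < a →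
      Disjoint (leftSeparatedTower (X := X) a) (leftSeparatedTower b) := by
    intro a b hba
    rw [leftSeparatedTower_eq a]
    refine disjoint_left.mpr fun x hxa hxb => ?_
    exact (leftSeparatedCore_subset _ _ hxa) (mem_iUnion.mpr ⟨⟨b, hba⟩, hxb⟩)
  intro a b hab
  exact hab.lt_or_gt.elim (fun hab => (hlt b a hab).symm) (hlt a b)

end Tower

theorem dense_compl_iUnion_leftSeparated {X : Type u} [TopologicalSpace X] {κ : Cardinal.{u}}
    (h : ∀ U : Set X, IsOpen U → U.Nonempty →
      ∀ (ι : Type u) (L : ι → Set X), (∀ i, LeftSeparated (L i)) →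
        U ⊆ ⋃ i, L i → κ ≤ #ι)
    {ι : Type u} (L : ι → Set X) (hL : ∀ i, LeftSeparated (L i)) (hι : #ι < κ) :
    Dense (⋃ i, L i)ᶜ := by
  by_contra hd
  have hne : (interior (⋃ i, L i)).Nonempty :=
    nonempty_iff_ne_empty.mpr (mt interior_eq_empty_iff_dense_compl.mp hd)
  exact hι.not_ge (h _ isOpen_interior hne ι L hL interior_subset)

/-- If no nonempty open subset of `X` can be covered by fewer than `κ`
left-separated sets, then `X` is `κ`-resolvable. -/
theorem stmt1 {X : Type u} [TopologicalSpace X] (κ : Cardinal.{u})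
    (h : ∀ U : Set X, IsOpen U → U.Nonempty →
      ∀ (ι : Type u) (L : ι → Set X), (∀ i, LeftSeparated (L i)) →
        U ⊆ ⋃ i, L i → κ ≤ #ι) :
    Resolvable X κ := by
  refine ⟨κ.ord.ToType, leftSeparatedTower, mk_ord_toType κ, fun a => ?_,
    pairwise_disjoint_leftSeparatedTower⟩
  exact dense_leftSeparatedTower <| dense_compl_iUnion_leftSeparated h _
    (fun b => leftSeparated_leftSeparatedTower b.1) (by simpa using mk_Iio_lt a)
end

section
/- Every topological space has a dense left-separated subspace. -/
universe u

open Cardinal Set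

/-!
Well-order `X` and keep the points that are not in the closure of their predecessors. By
well-founded induction every point lies in the closure of the kept ones, so they are dense. A kept
point `y` in the closure of the predecessors of `x` must itself precede `x` (otherwise it would lie
in the closure of its own predecessors), so each initial segment of the kept set is the trace of a
closed set.
-/

def notMemClosurePred {X : Type*} [TopologicalSpace X] (r : X → X → Prop) : Set X :=
  {x | x ∉ closure {y | r y x}}

section

variable {X : Type*} [TopologicalSpace X] (r : X → X → Prop)

theorem dense_notMemClosurePred [IsWellFounded X r] : Dense (notMemClosurePred r) := by
  intro x
  induction x using IsWellFounded.induction r with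
  | _ x ih =>
    by_cases hx : x ∈ notMemClosurePred r
    · exact subset_closure hx
    · exact closure_minimal ih isClosed_closure (not_not.mp hx)

variable {r} [Std.Trichotomous r] [IsTrans X r]

theorem rel_of_mem_closure_setOf_rel {x y : X} (hy : y ∈ notMemClosurePred r)
    (h : y ∈ closure {z | r z x}) : r y x := by
  by_contra hyx
  have hpred : {z | r z x} ⊆ {z | r z y} := fun z hz => by
    rcases trichotomous_of r y x with hlt | rfl | hgt
    · exact absurd hlt hyx
    · exact hz
    · exact _root_.trans hz hgt
  exact hy (closure_mono hpred h)

theorem preimage_closure_setOf_rel (x : X) :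
    ((↑) : notMemClosurePred r → X) ⁻¹' closure {z | r z x} =
      {y : notMemClosurePred r | r y x} :=
  Set.ext fun y => ⟨rel_of_mem_closure_setOf_rel y.2, fun h => subset_closure h⟩

end

theorem leftSeparated_notMemClosurePred {X : Type u} [TopologicalSpace X]
    (r : X → X → Prop) [IsWellOrder X r] : LeftSeparated (notMemClosurePred r) := by
  refine ⟨Subrel r (· ∈ notMemClosurePred r), inferInstance, fun x => ?_⟩
  change IsClosed {y : notMemClosurePred r | r y x}
  rw [← preimage_closure_setOf_rel]
  exact isClosed_closure.preimage continuous_subtype_val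

/-- Every topological space has a dense left-separated subspace. -/
theorem stmt2 {X : Type u} [TopologicalSpace X] :
    ∃ L : Set X, Dense L ∧ LeftSeparated L :=
  ⟨notMemClosurePred WellOrderingRel, dense_notMemClosurePred _,
    leftSeparated_notMemClosurePred _⟩
end

section
/- Let X be a topological space, D ⊆ X dense, κ ≥ |D| an infinite cardinal, and I a family of subsets of X. Suppose that for each x ∈ D and each pairwise disjoint subfamily Y of I of size < κ, there is Z ∈ I with Z ∩ (⋃Y) = ∅ and x ∈ closure(Z). Then X is κ-resolvable. -/
universe u

open Cardinal Set

/-- If for each `x ∈ D` and each disjoint subfamily `Y` of `I` of size `< κ` there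
is `Z ∈ I` disjoint from `⋃ Y` with `x ∈ closure Z`, then `X` is `κ`-resolvable. -/
theorem stmt3 {X : Type u} [TopologicalSpace X] (D : Set X) (hD : Dense D)
    (κ : Cardinal.{u}) (hκ : ℵ₀ ≤ κ) (hDκ : #D ≤ κ) (I : Set (Set X))
    (h : ∀ x ∈ D, ∀ Y ⊆ I, Y.PairwiseDisjoint id → #Y < κ →
      ∃ Z ∈ I, Z ∩ ⋃₀ Y = ∅ ∧ x ∈ closure Z) :
    Resolvable X κ := by
  unfold Resolvable
  classical
  set ι := κ.ord.ToType with hιdef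
  have hι : #ι = κ := Cardinal.mk_ord_toType κ
  have hιne : Nonempty ι := by
    rw [← Cardinal.mk_ne_zero_iff, hι]
    exact (Cardinal.aleph0_pos.trans_le hκ).ne'
  rcases D.eq_empty_or_nonempty with hDe | ⟨d0, hd0⟩
  · refine ⟨ι, fun _ => (∅ : Set X), hι, fun i => ?_, fun i j _ => by simp [Function.onFun]⟩
    have : Dense (∅ : Set X) := by rw [← hDe]; exact hD
    exact this
  · -- surjection f : ι → D × ι
    have hcard : #(↥D × ι) ≤ #ι := by
      rw [Cardinal.mk_prod, Cardinal.lift_id, Cardinal.lift_id, hι]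
      calc #D * κ ≤ κ * κ := by gcongr
        _ = κ := Cardinal.mul_eq_self hκ
    obtain ⟨e⟩ := Cardinal.le_def _ _ |>.mp hcard
    have hne : Nonempty (↥D × ι) := ⟨⟨⟨d0, hd0⟩, Classical.arbitrary ι⟩⟩
    set f := Function.invFun e with hf
    have hfs : Function.Surjective f := Function.invFun_surjective e.injective
    have wf : WellFoundedLT ι := inferInstance
    set F : ∀ x : ι, (∀ y, y < x → Set X) → Set X := fun x ih =>
      if H : ∃ W, W ∈ I ∧ W ∩ ⋃₀ (Set.range fun y : Set.Iio x => ih y y.2) = ∅ ∧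
          ((f x).1 : X) ∈ closure W
      then H.choose else ∅ with hF
    set Z : ι → Set X := fun x => wf.wf.fix F x with hZ
    have hZeq : ∀ x, Z x = F x fun y _ => Z y := fun x => wf.wf.fix_eq F x
    have hIio : ∀ x : ι, #(Set.Iio x) < κ := fun x => Cardinal.mk_Iio_ord_toType x
    have key : ∀ x : ι, Z x ∈ I ∧
        (Z x ∩ ⋃₀ (Set.range fun y : Set.Iio x => Z y) = ∅) ∧
        ((f x).1 : X) ∈ closure (Z x) := by
      intro x
      induction x using wf.wf.induction with
      | _ x ih =>
        have hdisj : ∀ a b : ι, a < b → b < x → Disjoint (Z a) (Z b) := by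
          intro a b hab hbx
          have := (ih b hbx).2.1
          rw [Set.disjoint_right]
          intro t htb hta
          have : t ∈ Z b ∩ ⋃₀ (Set.range fun y : Set.Iio b => Z y) :=
            ⟨htb, ⟨Z a, ⟨⟨a, hab⟩, rfl⟩, hta⟩⟩
          rw [(ih b hbx).2.1] at this
          exact this
        have H : ∃ W, W ∈ I ∧ W ∩ ⋃₀ (Set.range fun y : Set.Iio x => Z y) = ∅ ∧
            ((f x).1 : X) ∈ closure W := by
          obtain ⟨W, hWI, hWd, hWc⟩ := h (f x).1 (f x).1.2
            (Set.range fun y : Set.Iio x => Z y)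
            (by rintro _ ⟨y, rfl⟩; exact (ih y y.2).1)
            (by
              rintro _ ⟨a, rfl⟩ _ ⟨b, rfl⟩ hab
              rcases lt_trichotomy (a : ι) (b : ι) with hlt | heq | hgt
              · exact hdisj a b hlt b.2
              · exact absurd (congrArg Z heq) hab
              · exact (hdisj b a hgt a.2).symm)
            (lt_of_le_of_lt Cardinal.mk_range_le (hIio x))
          exact ⟨W, hWI, hWd, hWc⟩
        have hx : Z x = H.choose := by
          rw [hZeq x]; simp only [hF]; rw [dif_pos H]
        rw [hx]
        exact H.choose_spec
    -- pairwise disjointness of the Z's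
    have Zdisj : ∀ a b : ι, a < b → Disjoint (Z a) (Z b) := by
      intro a b hab
      rw [Set.disjoint_right]
      intro t htb hta
      have : t ∈ Z b ∩ ⋃₀ (Set.range fun y : Set.Iio b => Z y) :=
        ⟨htb, ⟨Z a, ⟨⟨a, hab⟩, rfl⟩, hta⟩⟩
      rw [(key b).2.1] at this
      exact this
    refine ⟨ι, fun i => ⋃ (α : ι) (_ : (f α).2 = i), Z α, hι, ?_, ?_⟩
    · intro i
      rw [← dense_closure]
      apply hD.mono
      intro x hx
      obtain ⟨α, hα⟩ := hfs (⟨x, hx⟩, i)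
      have h1 : ((f α).1 : X) = x := by rw [hα]
      have h2 : (f α).2 = i := by rw [hα]
      have : x ∈ closure (Z α) := h1 ▸ (key α).2.2
      exact closure_mono (Set.subset_iUnion₂ (s := fun α (_ : (f α).2 = i) => Z α) α h2) this
    · intro i j hij
      simp only [Function.onFun]
      rw [Set.disjoint_left]
      intro t ht ht'
      simp only [Set.mem_iUnion] at ht ht'
      obtain ⟨α, hαi, htα⟩ := ht
      obtain ⟨β, hβj, htβ⟩ := ht'
      have hne : α ≠ β := fun hab => hij (by rw [← hαi, ← hβj, hab])
      rcases hne.lt_or_gt with hlt | hlt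
      · exact (Zdisj α β hlt).le_bot ⟨htα, htβ⟩
      · exact (Zdisj β α hlt).le_bot ⟨htβ, htα⟩
end

section
/- If X is a topological space such that Δ(X) > sup{t(x,X) : x ∈ D} for some dense set D ⊆ X, then X is maximally resolvable, i.e., Δ(X)-resolvable. -/
/-!
Every nonempty open set contains a nonempty open set `U` all of whose nonempty open subsets
have cardinality `|U|`, and a maximal disjoint family of such sets has dense union. So it
suffices to split each such `U` into `Δ(X)` disjoint sets that are dense in `U`.
Let `μ = sup {t(x,X) : x ∈ D} < Δ(X) ≤ |U|`. Removing fewer than `|U|` points from `U` leaves a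
set that is still dense in `U`. Enumerate the pairs `(d, i)` with `d ∈ D ∩ U` and `i < Δ(X)`
in order type `|U|`; at step `(d, i)` fewer than `|U|` points have been used, so by tightness
at most `μ` fresh points of `U` accumulate at `d`, and they are given colour `i`. Every colour
class then accumulates at each point of `D ∩ U`, hence is dense in `U`.
-/

universe u

open Cardinal Set

/-- The tightness of `x` in `X`: the least infinite `l` such that whenever
`x ∈ closure A` there is `B ⊆ A` with `#B ≤ l` and `x ∈ closure B`. -/
noncomputable def tightnessAt (X : Type u) [TopologicalSpace X] (x : X) : Cardinal.{u} :=
  sInf {l | ℵ₀ ≤ l ∧ ∀ A : Set X, x ∈ closure A → ∃ B ⊆ A, #B ≤ l ∧ x ∈ closure B}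

open Function

theorem exists_forall_rec_biUnion_Iio {α β : Type*} [Preorder β] [WellFoundedLT β]
    (Q : β → Set α → Set α → Prop)
    (hQ : ∀ b (g : β → Set α), (∀ c < b, Q c (⋃ d ∈ Iio c, g d) (g c)) →
      ∃ B, Q b (⋃ c ∈ Iio b, g c) B) :
    ∃ g : β → Set α, ∀ b, Q b (⋃ c ∈ Iio b, g c) (g b) := by
  classical
  let g : β → Set α := wellFounded_lt.fix fun b rec =>
    if h : ∃ B, Q b (⋃ c, ⋃ hc : c ∈ Iio b, rec c hc) B then h.choose else ∅
  have hg : ∀ b, g b = if h : ∃ B, Q b (⋃ c ∈ Iio b, g c) B then h.choose else ∅ :=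
    fun b => wellFounded_lt.fix_eq _ b
  refine ⟨g, fun b => wellFounded_lt.induction (C := fun b => Q b (⋃ c ∈ Iio b, g c) (g b)) b
    fun b ih => ?_⟩
  have h := hQ b g ih
  rw [hg b, dif_pos h]
  exact h.choose_spec

theorem pairwise_disjoint_of_disjoint_biUnion_Iio {α β : Type*} [LinearOrder β]
    {g : β → Set α} (h : ∀ b, Disjoint (g b) (⋃ c ∈ Iio b, g c)) :
    Pairwise (Disjoint on g) := by
  intro b c hbc
  rcases hbc.lt_or_gt with hlt | hlt
  · exact ((h c).mono_right (subset_biUnion_of_mem (u := g) (show _ ∈ Iio _ from hlt))).symm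
  · exact (h b).mono_right (subset_biUnion_of_mem (u := g) (show _ ∈ Iio _ from hlt))

section

variable {X : Type u} [TopologicalSpace X]

structure IsCardMinimalOpen (U : Set X) : Prop where
  isOpen : IsOpen U
  nonempty : U.Nonempty
  mk_le : ∀ V, IsOpen V → V.Nonempty → V ⊆ U → #U ≤ #V

def ResolvableIn (U : Set X) (ι : Type*) : Prop :=
  ∃ F : ι → Set X, (∀ i, F i ⊆ U ∧ U ⊆ closure (F i)) ∧ Pairwise (Disjoint on F)

theorem dispersion_le_mk {G : Set X} (hG : IsOpen G) (hne : G.Nonempty) :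
    dispersion X ≤ #G :=
  csInf_le' ⟨G, hG, hne, rfl⟩

theorem tightnessAt_spec (x : X) :
    ℵ₀ ≤ tightnessAt X x ∧
      ∀ A : Set X, x ∈ closure A → ∃ B ⊆ A, #B ≤ tightnessAt X x ∧ x ∈ closure B :=
  csInf_mem
    (s := {l | ℵ₀ ≤ l ∧ ∀ A : Set X, x ∈ closure A → ∃ B ⊆ A, #B ≤ l ∧ x ∈ closure B})
    ⟨max ℵ₀ #X, le_max_left _ _, fun A hA =>
      ⟨A, subset_rfl, (mk_set_le A).trans (le_max_right _ _), hA⟩⟩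

theorem exists_isCardMinimalOpen_subset {W : Set X} (hW : IsOpen W) (hne : W.Nonempty) :
    ∃ U ⊆ W, IsCardMinimalOpen U := by
  obtain ⟨U, ⟨hUo, hUne, hUW⟩, hmin⟩ :=
    (InvImage.wf (fun V : Set X => #V) wellFounded_lt).has_min
      {V | IsOpen V ∧ V.Nonempty ∧ V ⊆ W} ⟨W, hW, hne, subset_rfl⟩
  exact ⟨U, hUW, hUo, hUne, fun V hVo hVne hVU =>
    not_lt.1 (hmin V ⟨hVo, hVne, hVU.trans hUW⟩)⟩

theorem IsCardMinimalOpen.subset_closure_diff {U S : Set X} (hU : IsCardMinimalOpen U)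
    (hS : #S < #U) : U ⊆ closure (U \ S) := by
  intro x hx
  by_contra hxS
  have hVS : U \ closure (U \ S) ⊆ S := fun v hv =>
    by_contra fun hvS => hv.2 (subset_closure ⟨hv.1, hvS⟩)
  have hUV := hU.mk_le _ (hU.isOpen.sdiff isClosed_closure) ⟨x, hx, hxS⟩ sdiff_subset
  exact (hUV.trans (mk_le_mk_of_subset hVS)).not_gt hS

theorem IsCardMinimalOpen.exists_pairwise_disjoint_mem_closure {U : Set X}
    (hU : IsCardMinimalOpen U) {μ : Cardinal.{u}} (hμU : μ < #U) (hU_inf : ℵ₀ ≤ #U)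
    {β : Type u} [LinearOrder β] [WellFoundedLT β] (hβ : ∀ b : β, #(Iio b) < #U)
    (p : β → X) (hpU : ∀ b, p b ∈ U) (hp : ∀ b, tightnessAt X (p b) ≤ μ) :
    ∃ g : β → Set X, Pairwise (Disjoint on g) ∧
      ∀ b, g b ⊆ U ∧ p b ∈ closure (g b) := by
  obtain ⟨g, hg⟩ := exists_forall_rec_biUnion_Iio
    (fun b used B => B ⊆ U \ used ∧ #B ≤ μ ∧ p b ∈ closure B) fun b g ih => by
      have hused : #(⋃ c ∈ Iio b, g c) < #U := calc
        _ ≤ #(Iio b) * ⨆ c : Iio b, #(g c) := mk_biUnion_le _ _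
        _ ≤ #(Iio b) * μ := mul_le_mul' le_rfl (ciSup_le' fun c => (ih c c.2).2.1)
        _ < #U := mul_lt_of_lt hU_inf (hβ b) hμU
      obtain ⟨B, hB, hBμ, hpB⟩ :=
        (tightnessAt_spec (p b)).2 _ (hU.subset_closure_diff hused (hpU b))
      exact ⟨B, hB, hBμ.trans (hp b), hpB⟩
  refine ⟨g, pairwise_disjoint_of_disjoint_biUnion_Iio fun b => ?_, fun b =>
    ⟨(hg b).1.trans sdiff_subset, (hg b).2.2⟩⟩
  exact disjoint_sdiff_left.mono_left (hg b).1

theorem IsCardMinimalOpen.resolvableIn {U D : Set X} (hU : IsCardMinimalOpen U)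
    (hD : Dense D) {μ : Cardinal.{u}} (hDμ : ∀ x ∈ D, tightnessAt X x ≤ μ) (hμU : μ < #U)
    (ι : Type u) (hι : #ι ≤ #U) : ResolvableIn U ι := by
  obtain ⟨x, hxU, hxD⟩ := hD.inter_open_nonempty U hU.isOpen hU.nonempty
  have hU_inf : ℵ₀ ≤ #U := (tightnessAt_spec x).1.trans ((hDμ x hxD).trans hμU.le)
  set ν := #(↥(D ∩ U) × ι)
  have hνU : ν ≤ #U := calc
    ν = #↥(D ∩ U) * #ι := by simp only [ν, mk_prod, lift_id]
    _ ≤ #U * #U := mul_le_mul' (mk_le_mk_of_subset inter_subset_right) hι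
    _ = #U := mul_eq_self hU_inf
  -- well-order the pairs so that every proper initial segment has fewer than `ν` elements
  obtain ⟨e⟩ := Cardinal.eq.1 (mk_ord_toType ν)
  obtain ⟨g, hg_disj, hg⟩ := hU.exists_pairwise_disjoint_mem_closure hμU hU_inf
    (fun b => (mk_Iio_lt b (by simp)).trans_le (by simpa using hνU))
    (fun b => (e b).1) (fun b => (e b).1.2.2) (fun b => hDμ _ (e b).1.2.1)
  refine ⟨fun i => ⋃ b ∈ {b | (e b).2 = i}, g b,
    fun i => ⟨iUnion₂_subset fun b _ => (hg b).1, ?_⟩, fun i j hij => ?_⟩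
  · have hDU : U ∩ D ⊆ closure (⋃ b ∈ {b | (e b).2 = i}, g b) := by
      rintro y ⟨hyU, hyD⟩
      obtain ⟨b, hb⟩ := e.surjective (⟨y, hyD, hyU⟩, i)
      have hyb : y ∈ closure (g b) := by simpa [hb] using (hg b).2
      exact closure_mono (subset_biUnion_of_mem (u := g) (show (e b).2 = i by rw [hb])) hyb
    exact (hD.open_subset_closure_inter hU.isOpen).trans (closure_minimal hDU isClosed_closure)
  · simp only [onFun, disjoint_iUnion₂_left, disjoint_iUnion₂_right]
    intro c (hc : (e c).2 = j) b (hb : (e b).2 = i)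
    exact hg_disj fun hbc => hij (by rw [← hb, ← hc, hbc])

theorem exists_pairwiseDisjoint_dense_sUnion {P : Set X → Prop}
    (hP : ∀ W, IsOpen W → W.Nonempty → ∃ U ⊆ W, U.Nonempty ∧ P U) :
    ∃ 𝒰 : Set (Set X), (∀ U ∈ 𝒰, P U) ∧ 𝒰.PairwiseDisjoint id ∧
      Dense (⋃₀ 𝒰) := by
  obtain ⟨𝒰, ⟨h𝒰P, h𝒰disj⟩, hmax⟩ :=
    zorn_subset {𝒰 : Set (Set X) | (∀ U ∈ 𝒰, P U) ∧ 𝒰.PairwiseDisjoint id}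
      fun c hc hchain => ⟨⋃₀ c, ⟨fun U ⟨𝒜, h𝒜, hU⟩ => (hc h𝒜).1 U hU,
        (pairwiseDisjoint_sUnion hchain.directedOn).2 fun 𝒜 h𝒜 => (hc h𝒜).2⟩,
        fun _ => subset_sUnion_of_mem⟩
  refine ⟨𝒰, h𝒰P, h𝒰disj, ?_⟩
  by_contra hnd
  obtain ⟨U, hUW, hUne, hPU⟩ := hP _ isClosed_closure.isOpen_compl
    (nonempty_compl.2 fun h => hnd (dense_iff_closure_eq.2 h))
  have hdisj : ∀ V ∈ 𝒰, Disjoint U V := fun V hV =>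
    (disjoint_compl_left.mono_left hUW).mono_right ((subset_sUnion_of_mem hV).trans subset_closure)
  have hU𝒰 : U ∈ 𝒰 := hmax
    ⟨forall_mem_insert.2 ⟨hPU, h𝒰P⟩, h𝒰disj.insert fun V hV _ => hdisj V hV⟩
    (subset_insert _ _) (mem_insert _ _)
  obtain ⟨x, hx⟩ := hUne
  exact hUW hx (subset_closure ⟨U, hU𝒰, hx⟩)

theorem resolvable_of_dense_sUnion {𝒰 : Set (Set X)} (h𝒰 : 𝒰.PairwiseDisjoint id)
    (hdense : Dense (⋃₀ 𝒰)) {ι : Type u} (hres : ∀ U ∈ 𝒰, ResolvableIn U ι) :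
    Resolvable X #ι := by
  choose! F hF hFdisj using hres
  refine ⟨ι, fun i => ⋃ U ∈ 𝒰, F U i, rfl, fun i => dense_closure.1 (hdense.mono ?_),
    fun i j hij => ?_⟩
  · exact sUnion_subset fun U hU =>
      (hF U hU i).2.trans (closure_mono (subset_biUnion_of_mem (u := fun U => F U i) hU))
  · simp only [onFun, disjoint_iUnion₂_left, disjoint_iUnion₂_right]
    intro V hV U hU
    by_cases hUV : U = V
    · subst hUV
      exact hFdisj U hU hij
    · exact (h𝒰 hU hV hUV).mono (hF U hU i).1 (hF V hV j).1

end

/-- If `Δ(X) > sup {t(x,X) : x ∈ D}` for some dense `D`, then `X` is maximally resolvable. -/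
theorem stmt4 {X : Type u} [TopologicalSpace X] (D : Set X) (hD : Dense D)
    (h : (⨆ x : D, tightnessAt X ↑x) < dispersion X) :
    Resolvable X (dispersion X) := by
  have hDμ : ∀ x ∈ D, tightnessAt X x ≤ ⨆ x : D, tightnessAt X ↑x :=
    fun x hx => le_ciSup bddAbove_of_small (⟨x, hx⟩ : D)
  obtain ⟨𝒰, h𝒰min, h𝒰disj, h𝒰dense⟩ := exists_pairwiseDisjoint_dense_sUnion
    fun (W : Set X) hW hne => (exists_isCardMinimalOpen_subset hW hne).imp
      fun _ hU => ⟨hU.1, hU.2.nonempty, hU.2⟩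
  have hres : ∀ U ∈ 𝒰, ResolvableIn U (dispersion X).out := fun U hU =>
    have hκU := dispersion_le_mk (h𝒰min U hU).isOpen (h𝒰min U hU).nonempty
    (h𝒰min U hU).resolvableIn hD hDμ (h.trans_le hκU) _ ((mk_out _).trans_le hκU)
  simpa using resolvable_of_dense_sUnion h𝒰disj h𝒰dense hres
end

section
/- If Δ(X) > t(X) (the dispersion character of X exceeds its tightness), then X is maximally resolvable. -/
universe u

open Cardinal Set

/-- The tightness of the space `X`. -/
noncomputable def tightness (X : Type u) [TopologicalSpace X] : Cardinal.{u} :=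
  ⨆ x : X, tightnessAt X x

/-!
Let `κ = t(X)`. Every nonempty open set contains a nonempty open `V` whose nonempty open subsets
all have the cardinality `μ = |V| ≥ Δ(X) > κ`. Enumerate `V × Δ(X)` in order type at most `μ`.
At the step indexed by `(x, ξ)` fewer than `μ` points have been used so far, so `x` lies in the
closure of the unused part of `V` and, by tightness, in the closure of a set of size `≤ κ` of unused
points. For each `ξ`, the union over `x ∈ V` of the sets chosen at `(x, ξ)` is dense in `V`, and
these unions are pairwise disjoint. Gluing such families along a maximal disjoint collection of
such `V`, whose union is dense, gives `Δ(X)` disjoint dense subsets of `X`.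
-/

open Function

section Tightness

variable {X : Type u} [TopologicalSpace X]

theorem tightnessAt_mem (x : X) :
    tightnessAt X x ∈
      {l | ℵ₀ ≤ l ∧ ∀ A : Set X, x ∈ closure A → ∃ B ⊆ A, #B ≤ l ∧ x ∈ closure B} :=
  csInf_mem ⟨max ℵ₀ #X, le_max_left _ _, fun A hA =>
    ⟨A, Subset.rfl, (mk_set_le A).trans (le_max_right _ _), hA⟩⟩

theorem tightnessAt_le_tightness (x : X) : tightnessAt X x ≤ tightness X :=
  le_ciSup bddAbove_of_small x

theorem aleph0_le_tightness [Nonempty X] : ℵ₀ ≤ tightness X :=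
  (tightnessAt_mem (Classical.arbitrary X)).1.trans (tightnessAt_le_tightness _)

theorem exists_subset_mk_le_tightness_of_mem_closure {x : X} {A : Set X}
    (hx : x ∈ closure A) : ∃ B ⊆ A, #B ≤ tightness X ∧ x ∈ closure B := by
  obtain ⟨B, hBA, hB, hxB⟩ := (tightnessAt_mem x).2 A hx
  exact ⟨B, hBA, hB.trans (tightnessAt_le_tightness x), hxB⟩

end Tightness

section Dispersion

variable {X : Type u} [TopologicalSpace X]

theorem exists_isOpen_mk_eq_dispersion (h : dispersion X ≠ 0) :
    ∃ G : Set X, IsOpen G ∧ G.Nonempty ∧ #G = dispersion X := by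
  have hne : {c | ∃ G : Set X, IsOpen G ∧ G.Nonempty ∧ #G = c}.Nonempty := by
    refine nonempty_iff_ne_empty.2 fun hempty => h ?_
    rw [dispersion, hempty, Cardinal.sInf_empty]
  exact csInf_mem hne

theorem exists_isOpen_subset_forall_mk_le {U : Set X} (hU : IsOpen U) (hne : U.Nonempty) :
    ∃ V ⊆ U, IsOpen V ∧ V.Nonempty ∧ ∀ W ⊆ V, IsOpen W → W.Nonempty → #V ≤ #W := by
  obtain ⟨V, ⟨hVU, hVo, hVne⟩, hmin⟩ :=
    (InvImage.wf (fun W : Set X => #W) Cardinal.lt_wf).has_min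
      {V | V ⊆ U ∧ IsOpen V ∧ V.Nonempty} ⟨U, Subset.rfl, hU, hne⟩
  exact ⟨V, hVU, hVo, hVne, fun W hWV hWo hWne =>
    not_lt.1 (hmin W ⟨hWV.trans hVU, hWo, hWne⟩)⟩

end Dispersion

theorem exists_pairwise_disjoint_of_forall_mk_lt {α T : Type u} {κ μ : Cardinal.{u}}
    (hμ : ℵ₀ ≤ μ) (hκ : κ < μ) (hT : #T ≤ μ) (Q : T → Set α → Prop)
    (hQ : ∀ t (P : Set α), #P < μ → ∃ S : Set α, #S ≤ κ ∧ Disjoint S P ∧ Q t S) :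
    ∃ B : T → Set α, Pairwise (Disjoint on B) ∧ ∀ t, Q t (B t) := by
  have step : ∀ t (P : Set α), ∃ S : Set α, #S ≤ κ ∧ (#P < μ → Disjoint S P ∧ Q t S) := by
    intro t P
    by_cases hP : #P < μ
    · obtain ⟨S, hS, hSQ⟩ := hQ t P hP
      exact ⟨S, hS, fun _ => hSQ⟩
    · exact ⟨∅, by simp, fun h => absurd h hP⟩
  choose S hS using step
  obtain ⟨r, hr, hrT⟩ := exists_ord_eq T
  have hseg : ∀ t, #{s // r s t} < μ := fun t => (card_typein_lt t hrT).trans_le hT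
  let B : T → Set α :=
    hr.wf.fix (C := fun _ => Set α) fun t IH => S t (⋃ s : {s // r s t}, IH s s.2)
  have hB : ∀ t, B t = S t (⋃ s : {s // r s t}, B s) := hr.wf.fix_eq _
  have hprev : ∀ t, #(⋃ s : {s // r s t}, B s) < μ := fun t =>
    calc #(⋃ s : {s // r s t}, B s) ≤ #{s // r s t} * ⨆ s : {s // r s t}, #(B s) :=
          mk_iUnion_le _
      _ ≤ #{s // r s t} * κ := by
          gcongr
          exact ciSup_le' fun s => hB s ▸ (hS _ _).1
      _ < μ := mul_lt_of_lt hμ (hseg t) hκ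
  have hBt : ∀ t, Disjoint (B t) (⋃ s : {s // r s t}, B s) ∧ Q t (B t) := fun t =>
    hB t ▸ (hS t _).2 (hprev t)
  refine ⟨B, fun t t' htt' => ?_, fun t => (hBt t).2⟩
  rcases trichotomous_of r t t' with h | h | h
  · exact ((hBt t').1.mono_right (subset_iUnion_of_subset ⟨t, h⟩ Subset.rfl)).symm
  · exact absurd h htt'
  · exact (hBt t).1.mono_right (subset_iUnion_of_subset ⟨t', h⟩ Subset.rfl)

section Resolvability

variable {X : Type u} [TopologicalSpace X]

def IsDisjointDenseIn {ι : Type*} (V : Set X) (D : ι → Set X) : Prop :=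
  (∀ i, D i ⊆ V ∧ V ⊆ closure (D i)) ∧ Pairwise (Disjoint on D)

theorem mem_closure_diff_of_mk_lt {V P : Set X} {x : X} {μ : Cardinal.{u}} (hV : IsOpen V)
    (hmin : ∀ W ⊆ V, IsOpen W → W.Nonempty → μ ≤ #W) (hx : x ∈ V) (hP : #P < μ) :
    x ∈ closure (V \ P) := by
  refine mem_closure_iff.2 fun N hN hxN => not_not.1 fun hempty => ?_
  have hsub : N ∩ V ⊆ P := fun y hy => not_not.1 fun hyP => hempty ⟨y, hy.1, hy.2, hyP⟩
  exact (hmin _ inter_subset_right (hN.inter hV) ⟨x, hxN, hx⟩).not_gt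
    ((mk_le_mk_of_subset hsub).trans_lt hP)

theorem exists_isDisjointDenseIn {V : Set X} (hV : IsOpen V)
    (hmin : ∀ W ⊆ V, IsOpen W → W.Nonempty → #V ≤ #W) (htV : tightness X < #V)
    (hVinf : ℵ₀ ≤ #V) {ι : Type u} (hι : #ι ≤ #V) :
    ∃ D : ι → Set X, IsDisjointDenseIn V D := by
  have hT : #(V × ι) ≤ #V := by
    simpa [mul_eq_self hVinf] using mul_le_mul_right hι #V
  obtain ⟨B, hdisj, hB⟩ := exists_pairwise_disjoint_of_forall_mk_lt hVinf htV hT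
    (fun p S => S ⊆ V ∧ (p.1 : X) ∈ closure S) fun p P hP => by
      obtain ⟨S, hSsub, hS, hpS⟩ := exists_subset_mk_le_tightness_of_mem_closure
        (mem_closure_diff_of_mk_lt hV hmin p.1.2 hP)
      exact ⟨S, hS, disjoint_sdiff_left.mono_left hSsub, hSsub.trans sdiff_subset, hpS⟩
  refine ⟨fun i => ⋃ x : V, B (x, i), fun i => ⟨iUnion_subset fun x => (hB (x, i)).1,
    fun x hx => closure_mono (subset_iUnion (fun x : V => B (x, i)) ⟨x, hx⟩) (hB _).2⟩,
    fun i j hij => ?_⟩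
  exact disjoint_iUnion_left.2 fun x => disjoint_iUnion_right.2 fun y =>
    hdisj fun h => hij (congrArg Prod.snd h)

theorem exists_pairwiseDisjoint_dense_sUnion_s5 {𝒢 : Set (Set X)}
    (h : ∀ U, IsOpen U → U.Nonempty → ∃ V ∈ 𝒢, V.Nonempty ∧ V ⊆ U) :
    ∃ 𝒱 ⊆ 𝒢, 𝒱.PairwiseDisjoint id ∧ Dense (⋃₀ 𝒱) := by
  obtain ⟨𝒱, ⟨h𝒱𝒢, hdisj⟩, hmax⟩ :=
    zorn_subset {𝒱 : Set (Set X) | 𝒱 ⊆ 𝒢 ∧ 𝒱.PairwiseDisjoint id} fun c hc hchain =>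
      ⟨⋃₀ c, ⟨sUnion_subset fun 𝒱 h𝒱 => (hc h𝒱).1,
        (hchain.pairwiseDisjoint_sUnion id).2 fun 𝒱 h𝒱 => (hc h𝒱).2⟩,
        fun _ => subset_sUnion_of_mem⟩
  refine ⟨𝒱, h𝒱𝒢, hdisj, dense_iff_inter_open.2 fun U hU hne => not_not.1 fun hempty => ?_⟩
  obtain ⟨V, hV𝒢, ⟨x, hxV⟩, hVU⟩ := h U hU hne
  have hV : ∀ W ∈ 𝒱, Disjoint V W := fun W hW =>
    disjoint_left.2 fun y hyV hyW => hempty ⟨y, hVU hyV, W, hW, hyW⟩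
  have hV𝒱 : V ∈ 𝒱 := hmax ⟨insert_subset hV𝒢 h𝒱𝒢, hdisj.insert fun W hW _ => hV W hW⟩
    (subset_insert V 𝒱) (mem_insert V 𝒱)
  exact disjoint_left.1 (hV V hV𝒱) hxV hxV

theorem exists_disjoint_dense_of_forall_isOpen {ι : Type*}
    (h : ∀ U, IsOpen U → U.Nonempty →
      ∃ V ⊆ U, V.Nonempty ∧ ∃ D : ι → Set X, IsDisjointDenseIn V D) :
    ∃ D : ι → Set X, (∀ i, Dense (D i)) ∧ Pairwise (Disjoint on D) := by
  obtain ⟨𝒱, h𝒱, hdisj, hdense⟩ :=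
    exists_pairwiseDisjoint_dense_sUnion_s5 (𝒢 := {V | ∃ D : ι → Set X, IsDisjointDenseIn V D})
      fun U hU hne => by
        obtain ⟨V, hVU, hVne, hV⟩ := h U hU hne
        exact ⟨V, hV, hVne, hVU⟩
  choose D hD using fun V : 𝒱 => h𝒱 V.2
  refine ⟨fun i => ⋃ V : 𝒱, D V i, fun i => dense_closure.1 (hdense.mono (sUnion_subset
    fun V hV => ((hD ⟨V, hV⟩).1 i).2.trans
      (closure_mono (subset_iUnion (fun V => D V i) ⟨V, hV⟩)))),
    fun i j hij => disjoint_iUnion_left.2 fun V => disjoint_iUnion_right.2 fun W => ?_⟩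
  obtain rfl | hVW := eq_or_ne V W
  · exact (hD V).2 hij
  · exact (hdisj V.2 W.2 (Subtype.coe_injective.ne hVW)).mono ((hD V).1 i).1 ((hD W).1 j).1

end Resolvability

/-- Pytkeev: if `Δ(X) > t(X)` then `X` is maximally resolvable. -/
theorem stmt5 {X : Type u} [TopologicalSpace X]
    (h : tightness X < dispersion X) :
    Resolvable X (dispersion X) := by
  obtain ⟨G, -, ⟨x, -⟩, hG⟩ := exists_isOpen_mk_eq_dispersion (X := X) (pos_of_gt h).ne'
  have : Nonempty X := ⟨x⟩
  have hlocal : ∀ U : Set X, IsOpen U → U.Nonempty →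
      ∃ V ⊆ U, V.Nonempty ∧ ∃ D : G → Set X, IsDisjointDenseIn V D := by
    intro U hU hne
    obtain ⟨V, hVU, hVo, hVne, hmin⟩ := exists_isOpen_subset_forall_mk_le hU hne
    have hΔV := dispersion_le_mk hVo hVne
    exact ⟨V, hVU, hVne, exists_isDisjointDenseIn hVo hmin (h.trans_le hΔV)
      (aleph0_le_tightness.trans (h.trans_le hΔV).le) (hG.le.trans hΔV)⟩
  obtain ⟨D, hD, hdisj⟩ := exists_disjoint_dense_of_forall_isOpen hlocal
  exact ⟨G, D, hG, hD, hdisj⟩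
end

section
/- Let X be a space and λ a singular cardinal such that every dense subset D of X is μ-resolvable for all μ < λ. Then X is λ-resolvable. -/
universe u

open Cardinal Set

/-- Transfer a resolvability family on a dense subspace to the ambient space. -/
lemma resolvable_subtype_transfer {X : Type u} [TopologicalSpace X] {D : Set X}
    (hD : Dense D) {μ : Cardinal.{u}} (hres : Resolvable ↥D μ) :
    ∃ (ι : Type u) (E : ι → Set X), #ι = μ ∧ (∀ i, Dense (E i)) ∧
      Pairwise (Function.onFun Disjoint E) ∧ ∀ i, E i ⊆ D := by
  obtain ⟨ι, F, hcard, hdense, hdisj⟩ := hres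
  refine ⟨ι, fun i => (↑) '' F i, hcard, ?_, ?_, ?_⟩
  · intro i
    exact hD.denseRange_val.dense_image continuous_subtype_val (hdense i)
  · intro i j hij
    exact Set.disjoint_image_of_injective Subtype.val_injective (hdisj hij)
  · intro i x hx
    obtain ⟨y, _, rfl⟩ := hx
    exact y.2

/-- If `λ` is singular and every dense subset of `X` is `(<λ)`-resolvable,
then `X` is `λ`-resolvable. -/
theorem stmt11 {X : Type u} [TopologicalSpace X] (lam : Cardinal.{u})
    (hinf : ℵ₀ ≤ lam) (hsing : lam.ord.cof < lam)
    (h : ∀ D : Set X, Dense D → ∀ μ < lam, Resolvable ↥D μ) :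
    Resolvable X lam := by
  set κ := lam.ord.cof with hκdef
  have hκ0 : ℵ₀ ≤ κ := Ordinal.aleph0_le_cof.2 (Cardinal.isSuccLimit_ord hinf)
  obtain ⟨ι₁, f, hlsub, hι₁⟩ := Ordinal.exists_lsub_cof lam.ord
  set μ : ι₁ → Cardinal.{u} := fun i => (f i).card with hμdef
  have hμlt : ∀ i, μ i < lam := fun i =>
    Cardinal.lt_ord.1 ((Ordinal.lt_lsub f i).trans_eq hlsub)
  have hbdd : BddAbove (Set.range μ) :=
    ⟨lam, by rintro _ ⟨i, rfl⟩; exact (hμlt i).le⟩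
  -- the supremum of the `μ i` is `lam`
  have hsup : iSup μ = lam := by
    have hsup_le : iSup μ ≤ lam := ciSup_le' fun i => (hμlt i).le
    by_contra hne
    have hc : iSup μ < lam := lt_of_le_of_ne hsup_le hne
    have hsucc : Order.succ (iSup μ) < lam := by
      rcases lt_or_eq_of_le (Order.succ_le_of_lt hc) with h' | h'
      · exact h'
      · exfalso
        have hal : ℵ₀ ≤ iSup μ := by
          by_contra hfin
          have : Order.succ (iSup μ) < ℵ₀ := by
            rw [Cardinal.succ_eq_of_lt_aleph0 (not_le.1 hfin)]
            exact Cardinal.add_lt_aleph0 (not_le.1 hfin) Cardinal.one_lt_aleph0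
          exact absurd (h' ▸ hinf) (not_le.2 this)
        have hreg : lam.IsRegular := h' ▸ Cardinal.isRegular_succ hal
        exact absurd hreg.cof_eq (ne_of_lt hsing)
    have hle : lam.ord ≤ (Order.succ (iSup μ)).ord := by
      rw [← hlsub]
      apply Ordinal.lsub_le
      intro i
      rw [Cardinal.lt_ord]
      exact (le_ciSup hbdd i).trans_lt (Order.lt_succ _)
    exact absurd (Cardinal.ord_lt_ord.2 hsucc) (not_lt.2 hle)
  -- `κ` many disjoint dense sets in `X`
  obtain ⟨ι₀, A, hA_card, hA_dense, hA_disj, -⟩ :=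
    resolvable_subtype_transfer dense_univ (h Set.univ dense_univ κ hsing)
  obtain ⟨e⟩ : Nonempty (ι₁ ≃ ι₀) := Cardinal.eq.1 (by rw [hι₁, hA_card])
  set B : ι₁ → Set X := fun i => A (e i) with hBdef
  have hB_dense : ∀ i, Dense (B i) := fun i => hA_dense (e i)
  have hB_disj : ∀ ⦃i j⦄, i ≠ j → Disjoint (B i) (B j) := fun i j hij =>
    hA_disj (e.injective.ne hij)
  -- refine each `B i` into `μ i` disjoint dense sets
  choose ιf E hEcard hEdense hEdisj hEsub using fun i : ι₁ =>
    resolvable_subtype_transfer (hB_dense i) (h (B i) (hB_dense i) (μ i) (hμlt i))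
  refine ⟨Σ i, ιf i, fun p => E p.1 p.2, ?_, fun p => hEdense p.1 p.2, ?_⟩
  · -- cardinality computation
    have hκne : κ ≠ 0 := ne_of_gt (Cardinal.aleph0_pos.trans_le hκ0)
    rw [Cardinal.mk_sigma]
    have h1 : (Cardinal.sum fun i => #(ιf i)) = Cardinal.sum μ := by
      congr 1; funext i; exact hEcard i
    rw [h1]
    refine le_antisymm ?_ (hsup ▸ Cardinal.iSup_le_sum μ)
    calc Cardinal.sum μ ≤ Cardinal.sum (fun _ : ι₁ => lam) :=
          Cardinal.sum_le_sum _ _ fun i => (hμlt i).le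
      _ = #ι₁ * lam := Cardinal.sum_const' _ _
      _ = lam := by
          rw [hι₁]
          exact Cardinal.mul_eq_right hinf hsing.le hκne
  · -- pairwise disjointness
    rintro ⟨i, j⟩ ⟨i', j'⟩ hne
    rcases eq_or_ne i i' with rfl | hii
    · have hjj : j ≠ j' := fun hj => hne (by rw [hj])
      exact hEdisj i hjj
    · exact Disjoint.mono (hEsub i j) (hEsub i' j') (hB_disj hii)
end

section
/- Let X be a space and μ a regular cardinal with c(X) < μ ≤ Δ(X). If for every nonempty open V ⊆ X and every T ⊆ V with |T| < μ, there is a nonempty open U ⊆ V with d(U \ T) < μ, then X is μ-resolvable. -/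
universe u

open Cardinal Set

/-- The density of a space: the least cardinality of a dense subset. -/
noncomputable def density (Y : Type u) [TopologicalSpace Y] : Cardinal.{u} :=
  sInf {c | ∃ S : Set Y, Dense S ∧ #S = c}

/-- The cellularity of `X`: the supremum of cardinalities of pairwise disjoint
families of nonempty open sets. -/
noncomputable def cellularity (X : Type u) [TopologicalSpace X] : Cardinal.{u} :=
  ⨆ U : {U : Set (Set X) // (∀ V ∈ U, IsOpen V ∧ V.Nonempty) ∧ U.PairwiseDisjoint id},
    #U.1

section Aux

variable {X : Type u} [TopologicalSpace X] {μ : Cardinal.{u}}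

lemma aux_card_open (hΔ : μ ≤ dispersion X) {G : Set X} (hG : IsOpen G) (hne : G.Nonempty) :
    μ ≤ #G :=
  hΔ.trans (csInf_le (OrderBot.bddBelow _) ⟨G, hG, hne, rfl⟩)

lemma aux_density_lt {Y : Type u} [TopologicalSpace Y] (hd : density Y < μ) :
    ∃ S : Set Y, Dense S ∧ #S < μ := by
  have hne : {c | ∃ S : Set Y, Dense S ∧ #S = c}.Nonempty := ⟨_, univ, dense_univ, rfl⟩
  obtain ⟨S, hS, hcard⟩ := csInf_mem hne
  exact ⟨S, hS, hcard ▸ hd⟩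

lemma aux_star (hΔ : μ ≤ dispersion X)
    (h : ∀ V : Set X, IsOpen V → V.Nonempty → ∀ T ⊆ V, #T < μ →
      ∃ U : Set X, U ⊆ V ∧ IsOpen U ∧ U.Nonempty ∧ density ↥(U \ T) < μ)
    {V : Set X} (hV : IsOpen V) (hVne : V.Nonempty) {T : Set X} (hT : #T < μ) :
    ∃ U S : Set X, IsOpen U ∧ U.Nonempty ∧ U ⊆ V ∧ Disjoint S T ∧ #S < μ ∧ U ⊆ closure S := by
  set T' := T ∩ V with hT'def
  have hT'V : T' ⊆ V := inter_subset_right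
  have hT' : #T' < μ := lt_of_le_of_lt (mk_le_mk_of_subset inter_subset_left) hT
  obtain ⟨U, hUV, hUopen, hUne, hdU⟩ := h V hV hVne T' hT'V hT'
  obtain ⟨D, hD, hDcard⟩ := aux_density_lt hdU
  have hsub : Subtype.val '' D ⊆ U \ T' := by
    rintro x ⟨y, _, rfl⟩; exact y.2
  refine ⟨U, Subtype.val '' D, hUopen, hUne, hUV, ?_, ?_, ?_⟩
  · rw [Set.disjoint_left]
    intro x hx hxT
    exact (hsub hx).2 ⟨hxT, hUV (hsub hx).1⟩
  · exact lt_of_le_of_lt mk_image_le hDcard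
  · have h1 : U \ T' ⊆ closure (Subtype.val '' D) := Subtype.dense_iff.mp hD
    have h2 : U ⊆ closure (U \ T') := by
      intro x hx
      rw [mem_closure_iff]
      intro W hW hxW
      have hWU : IsOpen (W ∩ U) := hW.inter hUopen
      have hWUne : (W ∩ U).Nonempty := ⟨x, hxW, hx⟩
      have hcard : μ ≤ #(↥(W ∩ U)) := aux_card_open hΔ hWU hWUne
      by_contra hcon
      have hss : W ∩ U ⊆ T' := by
        rintro y ⟨hyW, hyU⟩
        by_contra hyT
        exact hcon ⟨y, hyW, hyU, hyT⟩
      exact absurd (hcard.trans (mk_le_mk_of_subset hss)) (not_le.mpr hT')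
    exact h2.trans (closure_minimal h1 isClosed_closure)

lemma aux_global (hreg : μ.IsRegular) (hc : cellularity X < μ) (hΔ : μ ≤ dispersion X)
    (h : ∀ V : Set X, IsOpen V → V.Nonempty → ∀ T ⊆ V, #T < μ →
      ∃ U : Set X, U ⊆ V ∧ IsOpen U ∧ U.Nonempty ∧ density ↥(U \ T) < μ)
    {T : Set X} (hT : #T < μ) :
    ∃ S : Set X, Dense S ∧ #S < μ ∧ Disjoint S T := by
  classical
  set good : Set X → Prop := fun U => IsOpen U ∧ U.Nonempty ∧
    ∃ S : Set X, Disjoint S T ∧ #S < μ ∧ U ⊆ closure S with hgood_def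
  set C : Set (Set (Set X)) := {𝒰 | (∀ U ∈ 𝒰, good U) ∧ 𝒰.PairwiseDisjoint id} with hC_def
  obtain ⟨𝒰, h𝒰⟩ := zorn_subset C (by
    intro c hcC hchain
    refine ⟨⋃₀ c, ⟨?_, ?_⟩, fun s hs => subset_sUnion_of_mem hs⟩
    · rintro U ⟨a, hac, hUa⟩
      exact (hcC hac).1 U hUa
    · intro U hU V hV hne
      obtain ⟨a, hac, hUa⟩ := hU
      obtain ⟨b, hbc, hVb⟩ := hV
      rcases hchain.total hac hbc with hab | hba
      · exact (hcC hbc).2 (hab hUa) hVb hne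
      · exact (hcC hac).2 hUa (hba hVb) hne)
  obtain ⟨hgoods, hdisj⟩ := h𝒰.prop
  have hdense : Dense (⋃₀ 𝒰) := by
    by_contra hnd
    rw [dense_iff_closure_eq] at hnd
    have hVne : (closure (⋃₀ 𝒰))ᶜ.Nonempty := nonempty_compl.mpr hnd
    obtain ⟨U, S, hUopen, hUne, hUV, hSdisj, hScard, hUcl⟩ :=
      aux_star hΔ h (isOpen_compl_iff.mpr isClosed_closure) hVne hT
    have hUdisj : ∀ W ∈ 𝒰, Disjoint U W := by
      intro W hW
      rw [Set.disjoint_left]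
      intro x hxU hxW
      exact hUV hxU (subset_closure (mem_sUnion_of_mem hxW hW))
    have hnotmem : U ∉ 𝒰 := fun hmem =>
      hUne.ne_empty (disjoint_self.mp (hUdisj U hmem))
    have hins : insert U 𝒰 ∈ C := by
      constructor
      · rintro W (rfl | hW)
        · exact ⟨hUopen, hUne, S, hSdisj, hScard, hUcl⟩
        · exact hgoods W hW
      · exact hdisj.insert (fun W hW _ => hUdisj W hW)
    exact hnotmem (h𝒰.2 hins (subset_insert _ _) (mem_insert _ _))
  have hcardU : #↥𝒰 < μ := by
    refine lt_of_le_of_lt ?_ hc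
    exact le_ciSup (Cardinal.bddAbove_range _)
      (⟨𝒰, fun V hV => ⟨(hgoods V hV).1, (hgoods V hV).2.1⟩, hdisj⟩ :
        {U : Set (Set X) // (∀ V ∈ U, IsOpen V ∧ V.Nonempty) ∧ U.PairwiseDisjoint id})
  let g : ↥𝒰 → Set X := fun U => ((hgoods U.1 U.2).2.2).choose
  have hg : ∀ U : ↥𝒰, Disjoint (g U) T ∧ #(g U) < μ ∧ U.1 ⊆ closure (g U) :=
    fun U => ((hgoods U.1 U.2).2.2).choose_spec
  refine ⟨⋃ U : ↥𝒰, g U, ?_, ?_, ?_⟩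
  · rw [dense_iff_closure_eq, ← univ_subset_iff]
    have hsub : ⋃₀ 𝒰 ⊆ closure (⋃ U : ↥𝒰, g U) := by
      rintro x ⟨W, hW, hxW⟩
      exact closure_mono (subset_iUnion g ⟨W, hW⟩) ((hg ⟨W, hW⟩).2.2 hxW)
    calc (univ : Set X) = closure (⋃₀ 𝒰) := hdense.closure_eq.symm
      _ ⊆ closure (closure (⋃ U : ↥𝒰, g U)) := closure_mono hsub
      _ = closure (⋃ U : ↥𝒰, g U) := closure_closure
  · refine lt_of_le_of_lt (mk_iUnion_le g) ?_
    exact Cardinal.mul_lt_of_lt hreg.aleph0_le hcardU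
      (Cardinal.iSup_lt_of_isRegular hreg hcardU (fun U => (hg U).2.1))
  · exact Set.disjoint_iUnion_left.mpr (fun U => (hg U).1)

end Aux

/-- If `μ` is regular, `c(X) < μ ≤ Δ(X)`, and every nonempty open `V` and small
`T ⊆ V` admit a nonempty open `U ⊆ V` with `d(U \ T) < μ`, then `X` is `μ`-resolvable. -/
theorem stmt12 {X : Type u} [TopologicalSpace X] (μ : Cardinal.{u})
    (hreg : μ.IsRegular) (hc : cellularity X < μ) (hΔ : μ ≤ dispersion X)
    (h : ∀ V : Set X, IsOpen V → V.Nonempty → ∀ T ⊆ V, #T < μ →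
      ∃ U : Set X, U ⊆ V ∧ IsOpen U ∧ U.Nonempty ∧ density ↥(U \ T) < μ) :
    Resolvable X μ := by
  classical
  set ι := μ.ord.ToType with hι
  have key : ∀ T : Set X, #T < μ → ∃ S : Set X, Dense S ∧ #S < μ ∧ Disjoint S T :=
    fun T hT => aux_global hreg hc hΔ h hT
  let pick : Set X → Set X := fun T => if hT : #T < μ then (key T hT).choose else ∅
  have hpick : ∀ T : Set X, #T < μ →
      Dense (pick T) ∧ #(pick T) < μ ∧ Disjoint (pick T) T := by
    intro T hT
    simp only [pick, dif_pos hT]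
    exact (key T hT).choose_spec
  let f : ι → Set X := (wellFounded_lt (α := ι)).fix
    (fun i rec => pick (⋃ j : Iio i, rec j.1 j.2))
  have feq : ∀ i : ι, f i = pick (⋃ j : Iio i, f j.1) := fun i =>
    (wellFounded_lt (α := ι)).fix_eq _ i
  have hsmall : ∀ i : ι, (∀ j : ι, j < i → #(f j) < μ) → #(⋃ j : Iio i, f j.1) < μ := by
    intro i hrec
    refine lt_of_le_of_lt (mk_iUnion_le _) ?_
    have hIio : #(Iio i) < μ := Cardinal.mk_Iio_ord_toType i
    exact Cardinal.mul_lt_of_lt hreg.aleph0_le hIio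
      (Cardinal.iSup_lt_of_isRegular hreg hIio (fun j => hrec j.1 j.2))
  have main : ∀ i : ι, #(f i) < μ ∧ Dense (f i) ∧ Disjoint (f i) (⋃ j : Iio i, f j.1) := by
    intro i
    induction i using (wellFounded_lt (α := ι)).induction with
    | _ i ih =>
      have hT := hsmall i (fun j hj => (ih j hj).1)
      have := hpick _ hT
      rw [← feq i] at this
      exact ⟨this.2.1, this.1, this.2.2⟩
  refine ⟨ι, f, mk_ord_toType μ, fun i => (main i).2.1, ?_⟩
  intro i j hij
  rcases hij.lt_or_gt with hlt | hlt
  · exact (Disjoint.mono_right (subset_iUnion (fun k : Iio j => f k.1) ⟨i, hlt⟩)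
      (main j).2.2).symm
  · exact Disjoint.mono_right (subset_iUnion (fun k : Iio i => f k.1) ⟨j, hlt⟩)
      (main i).2.2
end

section
/- Let X be a space, λ a limit cardinal, and {D_α : α < cf(λ)} pairwise disjoint subsets of X such that for every β < cf(λ) the union ⋃{D_α : β ≤ α < cf(λ)} is dense in X. Suppose each D_α is κ_α-resolvable, where the sequence ⟨κ_α : α < cf(λ)⟩ converges to λ. Then X is λ-resolvable. -/
universe u

open Cardinal Set

/-!
Index the `λ` sets to be built by the ordinals `ξ < λ`, and resolve each `D α` into pieces
`E α ξ`, `ξ < κ α`. The `ξ`-th set is the union over `α` of the pieces `E α ξ` that exist.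
Pieces in different `D α` are disjoint because the `D α` are, and pieces in the same `D α` by
the choice of the resolution. Since `|ξ| < λ` and `κ α → λ`, the piece `E α ξ` exists for all
`α` in a tail, and its closure then contains the dense union of that tail of the `D α`.
-/

variable {X : Type u}

theorem resolvable_iff_exists_ordinal_family [TopologicalSpace X] {κ : Cardinal.{u}} :
    Resolvable X κ ↔ ∃ E : Ordinal.{u} → Set X,
      (∀ ξ < κ.ord, Dense (E ξ)) ∧ Pairwise (Function.onFun Disjoint E) := by
  constructor
  · rintro ⟨ι, F, hcard, hdense, hdisj⟩
    obtain ⟨e⟩ : Nonempty (κ.ord.ToType ≃ ι) := by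
      rw [← Cardinal.eq, mk_toType, card_ord, hcard]
    refine ⟨fun ξ => ⋃ h : ξ < κ.ord, F (e (Ordinal.ToType.mk ⟨ξ, h⟩)), fun ξ hξ => ?_,
      fun ξ η hne => ?_⟩
    · classical
      simpa only [iUnion_eq_dif, dif_pos hξ] using hdense _
    · refine disjoint_iUnion_left.2 fun hξ => disjoint_iUnion_right.2 fun hη => hdisj ?_
      exact fun h => hne (congrArg Subtype.val (Ordinal.ToType.mk.injective (e.injective h)))
  · rintro ⟨E, hdense, hdisj⟩
    refine ⟨κ.ord.ToType, fun i => E (Ordinal.ToType.mk.symm i), by rw [mk_toType, card_ord],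
      fun i => hdense _ (Ordinal.ToType.mk.symm i).2, fun i j hne => hdisj ?_⟩
    exact fun h => hne (Ordinal.ToType.mk.symm.injective (Subtype.ext h))

section Amalgamation

variable {D : Ordinal.{u} → Set X} {E : ∀ α, Ordinal.{u} → Set (D α)} {θ : Ordinal.{u}}

theorem dense_iUnion_image_val [TopologicalSpace X] {β ξ : Ordinal.{u}}
    (hdense : Dense (⋃ α ∈ {α | β ≤ α ∧ α < θ}, D α))
    (hE : ∀ α, β ≤ α → α < θ → Dense (E α ξ)) :
    Dense (⋃ α < θ, ((↑) : D α → X) '' E α ξ) := by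
  refine dense_closure.1 (hdense.mono (iUnion₂_subset fun α hα => ?_))
  exact (Subtype.dense_iff.1 (hE α hα.1 hα.2)).trans
    (closure_mono (subset_biUnion_of_mem (u := fun α => ((↑) : D α → X) '' E α ξ) hα.2))

theorem pairwise_disjoint_iUnion_image_val
    (hdisj : ∀ α < θ, ∀ β < θ, α ≠ β → Disjoint (D α) (D β))
    (hE : ∀ α < θ, Pairwise (Function.onFun Disjoint (E α))) :
    Pairwise (Function.onFun Disjoint fun ξ => ⋃ α < θ, ((↑) : D α → X) '' E α ξ) := by
  intro ξ η hne
  simp only [Function.onFun, disjoint_iUnion_left, disjoint_iUnion_right]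
  intro α' hα' α hα
  rcases eq_or_ne α α' with rfl | hαα'
  · exact (disjoint_image_iff Subtype.val_injective).2 (hE α hα hne)
  · exact (hdisj α hα α' hα' hαα').mono (Subtype.coe_image_subset _ _)
      (Subtype.coe_image_subset _ _)

end Amalgamation

theorem stmt13_general {X : Type u} [TopologicalSpace X] (lam : Cardinal.{u})
    (hlam : lam ≠ 0 ∧ Order.IsSuccPrelimit lam)
    (D : Ordinal.{u} → Set X) (κ : Ordinal.{u} → Cardinal.{u})
    (hdisj : ∀ α < lam.ord.cof.ord, ∀ β < lam.ord.cof.ord, α ≠ β → Disjoint (D α) (D β))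
    (hdense : ∀ β < lam.ord.cof.ord, Dense (⋃ α ∈ {α | β ≤ α ∧ α < lam.ord.cof.ord}, D α))
    (hres : ∀ α < lam.ord.cof.ord, Resolvable ↥(D α) (κ α))
    (hconv : ∀ μ < lam, ∃ β < lam.ord.cof.ord, ∀ α, β ≤ α → α < lam.ord.cof.ord → μ ≤ κ α) :
    Resolvable X lam := by
  have hfam : ∀ α, ∃ E : Ordinal.{u} → Set (D α), α < lam.ord.cof.ord →
      (∀ ξ < (κ α).ord, Dense (E ξ)) ∧ Pairwise (Function.onFun Disjoint E) := fun α =>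
    if hα : α < lam.ord.cof.ord then
      (resolvable_iff_exists_ordinal_family.1 (hres α hα)).imp fun _ hE _ => hE
    else ⟨fun _ => ∅, fun h => absurd h hα⟩
  choose E hE using hfam
  refine resolvable_iff_exists_ordinal_family.2 ⟨_, fun ξ hξ => ?_,
    pairwise_disjoint_iUnion_image_val hdisj fun α hα => (hE α hα).2⟩
  obtain ⟨β, hβ, htail⟩ := hconv _ (hlam.2.succ_lt (lt_ord.1 hξ))
  exact dense_iUnion_image_val (hdense β hβ) fun α hβα hα =>
    (hE α hα).1 ξ (lt_ord.2 (Order.succ_le_iff.1 (htail α hβα hα)))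

/-- If `λ` is a limit cardinal, the `D α` (`α < cf λ`) are pairwise disjoint with all
tail unions dense, each `D α` is `κ α`-resolvable and `⟨κ α⟩` converges to `λ`,
then `X` is `λ`-resolvable. -/
theorem stmt13 {X : Type u} [TopologicalSpace X] (lam : Cardinal.{u})
    (hlam : lam ≠ 0 ∧ Order.IsSuccPrelimit lam)
    (D : Ordinal.{u} → Set X) (κ : Ordinal.{u} → Cardinal.{u})
    (hdisj : ∀ α < lam.ord.cof.ord, ∀ β < lam.ord.cof.ord, α ≠ β → Disjoint (D α) (D β))
    (hdense : ∀ β < lam.ord.cof.ord, Dense (⋃ α ∈ {α | β ≤ α ∧ α < lam.ord.cof.ord}, D α))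
    (hres : ∀ α < lam.ord.cof.ord, Resolvable ↥(D α) (κ α))
    (hlt : ∀ α < lam.ord.cof.ord, κ α < lam)
    (hconv : ∀ μ < lam, ∃ β < lam.ord.cof.ord, ∀ α, β ≤ α → α < lam.ord.cof.ord → μ ≤ κ α) :
    Resolvable X lam :=
  stmt13_general lam hlam D κ hdisj hdense hres hconv
end
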